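/- arXiv:1911.04962 — 7 statements merged into one kernel-verified Lean document; each statement's English description precedes it below -/
import Mathlib

section
/- For all positive reals x and y with x ≠ y, the logarithmic mean satisfies (x - y)/(log x - log y) ≤ ((√x + √y)/2)² ≤ (x + y)/2 ≤ max(x, y). -/
open Real

/-!
With `u = √x`, `v = √y` and `t = (u - v) / (u + v)`, the bound on the logarithmic mean is
`log u - log v ≥ 2t`. Since `u / v = (1 + t) / (1 - t)`, this is the first term of the series
`log (1 + t) - log (1 - t) = 2 ∑ t ^ (2k+1) / (2k+1)`, whose terms are all nonnegative for `t ≥ 0`.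
-/

theorem two_mul_le_log_one_add_sub_log_one_sub {x : ℝ} (h₀ : 0 ≤ x) (h₁ : x < 1) :
    2 * x ≤ log (1 + x) - log (1 - x) := by
  have hsum := hasSum_log_sub_log_of_abs_lt_one (by rwa [abs_of_nonneg h₀])
  simpa using le_hasSum hsum 0 fun k _ => by positivity

theorem two_mul_sub_div_add_le_log_sub_log {u v : ℝ} (hv : 0 < v) (hvu : v ≤ u) :
    2 * ((u - v) / (u + v)) ≤ log u - log v := by
  have hu : 0 < u := hv.trans_le hvu
  have hx₀ : 0 ≤ (u - v) / (u + v) := div_nonneg (sub_nonneg.2 hvu) (by positivity)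
  have hx₁ : (u - v) / (u + v) < 1 := (div_lt_one (by positivity)).2 (by linarith)
  have hratio : (1 + (u - v) / (u + v)) / (1 - (u - v) / (u + v)) = u / v := by
    field_simp [hv.ne']
    ring
  rw [← log_div hu.ne' hv.ne', ← hratio, log_div (by linarith) (by linarith)]
  exact two_mul_le_log_one_add_sub_log_one_sub hx₀ hx₁

theorem div_log_sub_log_le_of_lt {x y : ℝ} (hy : 0 < y) (hyx : y < x) :
    (x - y) / (log x - log y) ≤ ((√x + √y) / 2) ^ 2 := by
  have hsy : 0 < √y := sqrt_pos.2 hy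
  have hsyx : √y < √x := sqrt_lt_sqrt hy.le hyx
  have hlog : log x - log y = 2 * (log √x - log √y) := by
    rw [log_sqrt (hy.trans hyx).le, log_sqrt hy.le]
    ring
  have hbound := two_mul_sub_div_add_le_log_sub_log hsy hsyx.le
  have hxy : x - y = (√x - √y) * (√x + √y) := by
    linear_combination sq_sqrt hy.le - sq_sqrt (hy.trans hyx).le
  rw [hlog, div_le_iff₀ (by linarith [log_lt_log hsy hsyx])]
  calc x - y = ((√x + √y) / 2) ^ 2 * (2 * (2 * ((√x - √y) / (√x + √y)))) := by
        rw [hxy]; field_simp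
    _ ≤ ((√x + √y) / 2) ^ 2 * (2 * (log √x - log √y)) := by gcongr

theorem div_log_sub_log_le {x y : ℝ} (hx : 0 < x) (hy : 0 < y) :
    (x - y) / (log x - log y) ≤ ((√x + √y) / 2) ^ 2 := by
  rcases lt_trichotomy x y with h | rfl | h
  · rw [← neg_div_neg_eq, neg_sub, neg_sub, add_comm √x]
    exact div_log_sub_log_le_of_lt hx h
  · -- the left side is the junk value `0 / 0 = 0`
    simp only [sub_self, div_zero]
    positivity
  · exact div_log_sub_log_le_of_lt hy h

theorem sq_sqrt_add_sqrt_div_two_le {x y : ℝ} (hx : 0 ≤ x) (hy : 0 ≤ y) :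
    ((√x + √y) / 2) ^ 2 ≤ (x + y) / 2 := by
  have := add_sq_le (a := √x) (b := √y)
  rw [sq_sqrt hx, sq_sqrt hy] at this
  linarith [div_pow (√x + √y) 2 2]

theorem log_mean_chain_general (x y : ℝ) (hx : 0 < x) (hy : 0 < y) :
    (x - y) / (Real.log x - Real.log y) ≤ ((Real.sqrt x + Real.sqrt y) / 2) ^ 2 ∧
    ((Real.sqrt x + Real.sqrt y) / 2) ^ 2 ≤ (x + y) / 2 ∧
    (x + y) / 2 ≤ max x y :=
  ⟨div_log_sub_log_le hx hy, sq_sqrt_add_sqrt_div_two_le hx.le hy.le,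
    by linarith [le_max_left x y, le_max_right x y]⟩

theorem log_mean_chain (x y : ℝ) (hx : 0 < x) (hy : 0 < y) (hxy : x ≠ y) :
    (x - y) / (Real.log x - Real.log y) ≤ ((Real.sqrt x + Real.sqrt y) / 2) ^ 2 ∧
    ((Real.sqrt x + Real.sqrt y) / 2) ^ 2 ≤ (x + y) / 2 ∧
    (x + y) / 2 ≤ max x y :=
  log_mean_chain_general x y hx hy
end

section
/- For all positive reals x, y and all positive reals α, β, one has (α + β)²(y^α - x^α)(y^β - x^β) ≥ 4αβ(y^{(α+β)/2} - x^{(α+β)/2})². -/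
open Real

/-!
Writing `x = exp (m - u)` and `y = exp (m + u)`, every difference `y ^ γ - x ^ γ` equals
`2 exp (γ m) sinh (γ u)`; the exponential factors cancel and the inequality becomes
`4ab sinh² (s u) ≤ 4s² sinh (a u) sinh (b u)` with `s = (a + b) / 2`, `d = (a - b) / 2`.
Since `sinh (a u) sinh (b u) = sinh² (s u) - sinh² (d u)` and `4ab = 4s² - 4d²`, this is
`s² sinh² (d u) ≤ d² sinh² (s u)`, i.e. `|sinh t| / |t|` is increasing in `|t|`, which follows
from the convexity of `sinh` on `[0, ∞)` together with `sinh 0 = 0`.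
-/

namespace Real

theorem convexOn_sinh : ConvexOn ℝ (Set.Ici 0) sinh := by
  refine MonotoneOn.convexOn_of_deriv (convex_Ici 0) continuous_sinh.continuousOn
    differentiable_sinh.differentiableOn ?_
  rw [deriv_sinh, interior_Ici]
  intro v hv w hw hvw
  rw [cosh_le_cosh, abs_of_pos hv, abs_of_pos hw]
  exact hvw

theorem sinh_mul_le_mul_sinh {c v : ℝ} (hc₀ : 0 ≤ c) (hc₁ : c ≤ 1) (hv : 0 ≤ v) :
    sinh (c * v) ≤ c * sinh v := by
  have h := convexOn_sinh.2 (Set.mem_Ici.2 le_rfl) (Set.mem_Ici.2 hv)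
    (sub_nonneg.2 hc₁) hc₀ (sub_add_cancel 1 c)
  simpa only [smul_eq_mul, mul_zero, zero_add, sinh_zero] using h

theorem sq_mul_sinh_mul_sq_le {d s : ℝ} (h : |d| ≤ |s|) (u : ℝ) :
    s ^ 2 * sinh (d * u) ^ 2 ≤ d ^ 2 * sinh (s * u) ^ 2 := by
  suffices habs : |s| * |sinh (d * u)| ≤ |d| * |sinh (s * u)| by
    have := pow_le_pow_left₀ (by positivity) habs 2
    simpa only [mul_pow, sq_abs] using this
  rcases (abs_nonneg s).eq_or_lt with hs | hs
  · rw [← hs, zero_mul]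
    positivity
  have hc := sinh_mul_le_mul_sinh (div_nonneg (abs_nonneg d) hs.le) ((div_le_one hs).2 h)
    (mul_nonneg (abs_nonneg s) (abs_nonneg u))
  have harg : |d| / |s| * (|s| * |u|) = |d| * |u| := by field_simp
  rw [harg] at hc
  rw [abs_sinh, abs_sinh, abs_mul, abs_mul]
  calc |s| * sinh (|d| * |u|) ≤ |s| * (|d| / |s| * sinh (|s| * |u|)) := by gcongr
    _ = |d| * sinh (|s| * |u|) := by field_simp

theorem sinh_add_mul_sinh_sub (p q : ℝ) :
    sinh (p + q) * sinh (p - q) = sinh p ^ 2 - sinh q ^ 2 := by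
  rw [sinh_add, sinh_sub]
  linear_combination sinh p ^ 2 * cosh_sq q - sinh q ^ 2 * cosh_sq p

theorem four_mul_mul_sinh_sq_le {a b : ℝ} (ha : 0 ≤ a) (hb : 0 ≤ b) (u : ℝ) :
    4 * a * b * sinh ((a + b) / 2 * u) ^ 2 ≤ (a + b) ^ 2 * (sinh (a * u) * sinh (b * u)) := by
  have hds : |(a - b) / 2| ≤ |(a + b) / 2| := by
    rw [abs_of_nonneg (by positivity : 0 ≤ (a + b) / 2), abs_le]
    constructor <;> linarith
  have key := sq_mul_sinh_mul_sq_le hds u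
  have hprod : sinh (a * u) * sinh (b * u) =
      sinh ((a + b) / 2 * u) ^ 2 - sinh ((a - b) / 2 * u) ^ 2 := by
    rw [← sinh_add_mul_sinh_sub]
    ring_nf
  rw [hprod]
  linear_combination 4 * key

theorem rpow_sub_rpow_eq_mul_sinh {x y : ℝ} (hx : 0 < x) (hy : 0 < y) (γ : ℝ) :
    y ^ γ - x ^ γ =
      2 * exp (γ * ((log x + log y) / 2)) * sinh (γ * ((log y - log x) / 2)) := by
  rw [rpow_def_of_pos hx, rpow_def_of_pos hy, sinh_eq, mul_div_assoc', mul_sub,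
    mul_assoc, mul_assoc, ← exp_add, ← exp_add]
  ring_nf

end Real

theorem power_mean_ineq (x y α β : ℝ) (hx : 0 < x) (hy : 0 < y)
    (hα : 0 < α) (hβ : 0 < β) :
    4 * α * β * (y ^ ((α + β) / 2) - x ^ ((α + β) / 2)) ^ 2 ≤
      (α + β) ^ 2 * (y ^ α - x ^ α) * (y ^ β - x ^ β) := by
  simp only [rpow_sub_rpow_eq_mul_sinh hx hy]
  set m := (log x + log y) / 2
  set u := (log y - log x) / 2
  have hexp : exp (α * m) * exp (β * m) = exp ((α + β) / 2 * m) ^ 2 := by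
    rw [← exp_add, sq, ← exp_add]
    ring_nf
  calc 4 * α * β * (2 * exp ((α + β) / 2 * m) * sinh ((α + β) / 2 * u)) ^ 2
      = 4 * exp ((α + β) / 2 * m) ^ 2 * (4 * α * β * sinh ((α + β) / 2 * u) ^ 2) := by ring
    _ ≤ 4 * exp ((α + β) / 2 * m) ^ 2 * ((α + β) ^ 2 * (sinh (α * u) * sinh (β * u))) :=
      mul_le_mul_of_nonneg_left (four_mul_mul_sinh_sq_le hα.le hβ.le u) (by positivity)
    _ = (α + β) ^ 2 * (2 * exp (α * m) * sinh (α * u)) * (2 * exp (β * m) * sinh (β * u)) := by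
      rw [← hexp]
      ring
end

section
/- For all p ∈ [1, 2] and all positive reals x, y, one has (4/p)(x^{p/2} - y^{p/2})² ≤ (x - y)(Φ_p'(x) - Φ_p'(y)), where Φ_p'(s) = p(s^{p-1} - 1)/(p - 1) for p > 1 and Φ_1'(s) = log s. -/
/-!
On `[y, x]` both sides are integrals of powers of `s`: `x^(p/2) - y^(p/2)` integrates
`f s = (p/2) s^(p/2-1)`, while `Φ_p'` is an antiderivative of `p s^(p-2) = (4/p) (f s)²`, for
`p = 1` as well. The inequality is therefore Cauchy–Schwarz, `(∫ f)² ≤ (x - y) ∫ f²`.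
-/

open Real

/-- Derivative of the entropy generator: `Φ₁'(s) = log s` and
`Φ_p'(s) = p (s^(p-1) - 1)/(p-1)` for `p ≠ 1`. -/
noncomputable def PhiDeriv (p s : ℝ) : ℝ :=
  if p = 1 then Real.log s else p * (s ^ (p - 1) - 1) / (p - 1)

open MeasureTheory intervalIntegral

theorem sq_intervalIntegral_le_mul_integral_sq {f : ℝ → ℝ} {a b : ℝ}
    (hf : IntervalIntegrable f volume a b)
    (hf2 : IntervalIntegrable (fun s => f s ^ 2) volume a b) :
    (∫ s in a..b, f s) ^ 2 ≤ (b - a) * ∫ s in a..b, f s ^ 2 := by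
  wlog hab : a ≤ b generalizing a b
  · have := this hf.symm hf2.symm (le_of_not_ge hab)
    rw [integral_symm a b, integral_symm a b] at this
    linarith
  set I := ∫ s in a..b, f s
  set J := ∫ s in a..b, f s ^ 2
  -- variance trick: expand `0 ≤ ∫ (f - t)²` and take `t` the mean of `f`
  have hvar : ∀ t : ℝ, 0 ≤ J - 2 * t * I + t ^ 2 * (b - a) := fun t => by
    have hexp : ∫ s in a..b, (f s - t) ^ 2 = J - 2 * t * I + t ^ 2 * (b - a) := by
      simp_rw [show ∀ s, (f s - t) ^ 2 = f s ^ 2 - 2 * t * f s + t ^ 2 from fun s => by ring]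
      rw [integral_add (hf2.sub (hf.const_mul _)) intervalIntegrable_const,
        integral_sub hf2 (hf.const_mul _), intervalIntegral.integral_const_mul,
        intervalIntegral.integral_const, smul_eq_mul]
      ring
    exact hexp ▸ integral_nonneg hab fun s _ => sq_nonneg _
  rcases hab.eq_or_lt with rfl | hlt
  · simp [I]
  · have := hvar (I / (b - a))
    have hba : 0 < b - a := sub_pos.mpr hlt
    field_simp at this
    nlinarith

theorem sq_sub_le_mul_integral_sq_of_hasDerivAt {F f : ℝ → ℝ} {a b : ℝ}
    (hF : ∀ s ∈ Set.uIcc a b, HasDerivAt F (f s) s) (hf : ContinuousOn f (Set.uIcc a b)) :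
    (F b - F a) ^ 2 ≤ (b - a) * ∫ s in a..b, f s ^ 2 := by
  rw [← integral_eq_sub_of_hasDerivAt hF hf.intervalIntegrable]
  exact sq_intervalIntegral_le_mul_integral_sq hf.intervalIntegrable
    (hf.pow 2).intervalIntegrable

theorem hasDerivAt_phiDeriv (p : ℝ) {s : ℝ} (hs : 0 < s) :
    HasDerivAt (PhiDeriv p) (p * s ^ (p - 2)) s := by
  by_cases hp : p = 1
  · subst hp
    have hlog : PhiDeriv 1 = Real.log := funext fun _ => if_pos rfl
    rw [hlog, show (1 : ℝ) - 2 = -1 by norm_num, rpow_neg_one, one_mul]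
    exact hasDerivAt_log hs.ne'
  · have hpow : PhiDeriv p = fun s => p * (s ^ (p - 1) - 1) / (p - 1) :=
      funext fun _ => if_neg hp
    rw [hpow]
    refine ((((hasDerivAt_rpow_const (Or.inl hs.ne')).sub_const 1).const_mul p).div_const
      (p - 1)).congr_deriv ?_
    rw [show p - 1 - 1 = p - 2 by ring]
    field_simp [sub_ne_zero.mpr hp]

theorem integral_mul_rpow_sub_two_eq_phiDeriv_sub (p : ℝ) {x y : ℝ} (hx : 0 < x) (hy : 0 < y) :
    ∫ s in y..x, p * s ^ (p - 2) = PhiDeriv p x - PhiDeriv p y :=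
  integral_eq_sub_of_hasDerivAt
    (fun _ hs => hasDerivAt_phiDeriv p ((lt_inf_iff.mpr ⟨hy, hx⟩).trans_le hs.1))
    ((intervalIntegrable_rpow (Or.inr (Set.notMem_uIcc_of_lt hy hx))).const_mul p)

theorem phi_deriv_ineq (p x y : ℝ) (hp : p ∈ Set.Icc (1 : ℝ) 2)
    (hx : 0 < x) (hy : 0 < y) :
    (4 / p) * (x ^ (p / 2) - y ^ (p / 2)) ^ 2 ≤
      (x - y) * (PhiDeriv p x - PhiDeriv p y) := by
  have hp0 : 0 < p := one_pos.trans_le hp.1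
  have hpos : ∀ s ∈ Set.uIcc y x, 0 < s := fun s hs =>
    (lt_inf_iff.mpr ⟨hy, hx⟩).trans_le hs.1
  have hCS := sq_sub_le_mul_integral_sq_of_hasDerivAt (F := (· ^ (p / 2)))
    (f := fun s => p / 2 * s ^ (p / 2 - 1))
    (fun s hs => hasDerivAt_rpow_const (Or.inl (hpos s hs).ne'))
    (continuousOn_const.mul (continuousOn_id.rpow_const fun s hs => Or.inl (hpos s hs).ne'))
  have hsq : ∫ s in y..x, (p / 2 * s ^ (p / 2 - 1)) ^ 2 =
      p / 4 * ∫ s in y..x, p * s ^ (p - 2) := by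
    rw [← intervalIntegral.integral_const_mul]
    refine integral_congr fun s hs => ?_
    rw [mul_pow, sq (s ^ _), ← rpow_add (hpos s hs)]
    ring_nf
  rw [hsq, integral_mul_rpow_sub_two_eq_phiDeriv_sub p hx hy] at hCS
  calc 4 / p * (x ^ (p / 2) - y ^ (p / 2)) ^ 2
      ≤ 4 / p * ((x - y) * (p / 4 * (PhiDeriv p x - PhiDeriv p y))) := by gcongr
    _ = (x - y) * (PhiDeriv p x - PhiDeriv p y) := by field_simp
end

section
/- For all p ∈ (1, 2] and all positive reals x, y, one has (x^{p/2} - y^{p/2})² ≥ x^p - y^p - p y^{p-1}(x - y). -/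
open Real

/-! Expanding the square, the inequality becomes
`x^(p/2) y^(p/2) ≤ y^p + (p/2) y^(p-1) (x - y)`; after dividing by `y^(p-1)` this is the weighted
AM–GM inequality `x^(p/2) y^(1-p/2) ≤ (p/2) x + (1 - p/2) y`, valid since `p/2 ∈ [0, 1]`. -/

theorem rpow_half_mul_rpow_half_le {p x y : ℝ} (hp₀ : 0 ≤ p) (hp₂ : p ≤ 2) (hx : 0 ≤ x)
    (hy : 0 < y) : x ^ (p / 2) * y ^ (p / 2) ≤ y ^ p + p / 2 * y ^ (p - 1) * (x - y) := by
  have amgm : x ^ (p / 2) * y ^ (1 - p / 2) ≤ p / 2 * x + (1 - p / 2) * y :=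
    geom_mean_le_arith_mean2_weighted (by linarith) (by linarith) hx hy.le (by ring)
  have split_half : y ^ (p / 2) = y ^ (1 - p / 2) * y ^ (p - 1) := by
    rw [← rpow_add hy]; ring_nf
  have split_p : y ^ p = y ^ (p - 1) * y := by
    rw [← rpow_add_one hy.ne']; ring_nf
  calc x ^ (p / 2) * y ^ (p / 2) = x ^ (p / 2) * y ^ (1 - p / 2) * y ^ (p - 1) := by
        rw [split_half]; ring
    _ ≤ (p / 2 * x + (1 - p / 2) * y) * y ^ (p - 1) :=
        mul_le_mul_of_nonneg_right amgm (rpow_nonneg hy.le _)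
    _ = y ^ p + p / 2 * y ^ (p - 1) * (x - y) := by rw [split_p]; ring

theorem rpow_half_sq {z : ℝ} (hz : 0 ≤ z) (p : ℝ) : (z ^ (p / 2)) ^ 2 = z ^ p := by
  rw [← rpow_mul_natCast hz]; norm_num

theorem sq_pow_half_diff_ge (p x y : ℝ) (hp : p ∈ Set.Ioc (1 : ℝ) 2)
    (hx : 0 < x) (hy : 0 < y) :
    x ^ p - y ^ p - p * y ^ (p - 1) * (x - y) ≤ (x ^ (p / 2) - y ^ (p / 2)) ^ 2 := by
  have key := rpow_half_mul_rpow_half_le (by linarith [hp.1]) hp.2 hx.le hy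
  rw [sub_sq, rpow_half_sq hx.le, rpow_half_sq hy.le]
  linarith
end

section
/- Let μ be a probability measure and g a nonnegative measurable function with ∫ g dμ = 1. Then (∫ |g - 1| dμ)² ≤ 2 ∫ g log g dμ. -/
/-!
For `t ≥ 0` one has `3 (t - 1)² ≤ (2t + 4) (t log t - t + 1)`: both sides vanish at `t = 1`,
and the derivative of their difference is `4 ((t + 1) log t - 2 (t - 1))`, which has the sign
of `t - 1`. Hence `|g - 1| ≤ √((2g + 4) / 3) · √(g log g - g + 1)` pointwise, and
Cauchy–Schwarz bounds `(∫ |g - 1|)²` by `(∫ (2g + 4) / 3) · ∫ (g log g - g + 1) = 2 ∫ g log g`.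
-/

open Real MeasureTheory Set InformationTheory

lemma monotoneOn_add_one_mul_log_sub_two_mul_sub_one :
    MonotoneOn (fun x => (x + 1) * log x - 2 * (x - 1)) (Ioi 0) := by
  have hderiv {x : ℝ} (hx : 0 < x) :
      HasDerivAt (fun x => (x + 1) * log x - 2 * (x - 1)) (log x + x⁻¹ - 1) x := by
    have := (((hasDerivAt_id x).add_const 1).mul (hasDerivAt_log hx.ne')).sub
      (((hasDerivAt_id x).sub_const 1).const_mul 2)
    refine this.congr_deriv ?_
    simp only [id]
    field_simp
    ring
  refine monotoneOn_of_hasDerivWithinAt_nonneg (convex_Ioi 0)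
    (fun x hx => (hderiv hx).continuousAt.continuousWithinAt)
    (fun x hx => (hderiv (interior_subset hx)).hasDerivWithinAt) fun x hx => ?_
  rw [interior_Ioi] at hx
  have := log_le_sub_one_of_pos (inv_pos.2 hx)
  rw [log_inv] at this
  linarith

lemma three_mul_sq_sub_one_le_mul_klFun {x : ℝ} (hx : 0 ≤ x) :
    3 * (x - 1) ^ 2 ≤ (2 * x + 4) * klFun x := by
  set ψ := fun x => (2 * x + 4) * klFun x - 3 * (x - 1) ^ 2
  have hψ_deriv {x : ℝ} (hx : x ≠ 0) :
      HasDerivAt ψ (4 * ((x + 1) * log x - 2 * (x - 1))) x := by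
    have := (((hasDerivAt_id x).const_mul 2).add_const 4).mul (hasDerivAt_klFun hx)
      |>.sub ((((hasDerivAt_id x).sub_const 1).pow 2).const_mul 3)
    refine (this : HasDerivAt ψ _ x).congr_deriv ?_
    simp only [id, klFun_apply]
    ring
  have hmono := monotoneOn_add_one_mul_log_sub_two_mul_sub_one
  have hmin : IsMinOn ψ (Ici 0) 1 := by
    refine isMinOn_Ici_of_deriv (by unfold ψ; fun_prop) (by unfold ψ; fun_prop)
      (fun x hx => (hψ_deriv hx.1.ne').differentiableAt.differentiableWithinAt)
      (fun x hx => (hψ_deriv (one_pos.trans hx).ne').differentiableAt.differentiableWithinAt)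
      (fun x hx => ?_) fun x hx => ?_
    · rw [(hψ_deriv hx.1.ne').deriv]
      have := hmono hx.1 (mem_Ioi.2 one_pos) hx.2.le
      simp only [log_one] at this
      linarith
    · have hx₀ : 0 < x := one_pos.trans hx
      rw [(hψ_deriv hx₀.ne').deriv]
      have := hmono (mem_Ioi.2 one_pos) (mem_Ioi.2 hx₀) (le_of_lt hx)
      simp only [log_one] at this
      linarith
  have := hmin (mem_Ici.2 hx)
  simp only [mem_ofPred_eq, ψ, klFun_one] at this
  linarith

section CauchySchwarz

variable {α : Type*} [MeasurableSpace α] {μ : Measure α}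

lemma MeasureTheory.Integrable.memLp_two_sqrt {f : α → ℝ} (hf_int : Integrable f μ)
    (hf : 0 ≤ᵐ[μ] f) : MemLp (fun x => √(f x)) 2 μ := by
  refine (memLp_two_iff_integrable_sq
    (continuous_sqrt.comp_aestronglyMeasurable hf_int.aestronglyMeasurable)).2 ?_
  refine hf_int.congr ?_
  filter_upwards [hf] with x hx using (sq_sqrt hx).symm

lemma integral_sqrt_mul_sqrt_le {f g : α → ℝ} (hf : 0 ≤ᵐ[μ] f) (hg : 0 ≤ᵐ[μ] g)
    (hf_int : Integrable f μ) (hg_int : Integrable g μ) :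
    ∫ x, √(f x) * √(g x) ∂μ ≤ √(∫ x, f x ∂μ) * √(∫ x, g x ∂μ) := by
  have := integral_mul_le_Lp_mul_Lq_of_nonneg Real.HolderConjugate.two_two
    (ae_of_all _ fun x => sqrt_nonneg (f x)) (ae_of_all _ fun x => sqrt_nonneg (g x))
    (by simpa using hf_int.memLp_two_sqrt hf) (by simpa using hg_int.memLp_two_sqrt hg)
  have h_integral_sq {u : α → ℝ} (hu : 0 ≤ᵐ[μ] u) :
      ∫ x, √(u x) ^ (2 : ℝ) ∂μ = ∫ x, u x ∂μ := by
    refine integral_congr_ae ?_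
    filter_upwards [hu] with x hx
    rw [rpow_two, sq_sqrt hx]
  rwa [h_integral_sq hf, h_integral_sq hg, ← sqrt_eq_rpow, ← sqrt_eq_rpow] at this

theorem sq_integral_abs_le_integral_mul_integral {f g h : α → ℝ} (hf : 0 ≤ᵐ[μ] f)
    (hg : 0 ≤ᵐ[μ] g) (hf_int : Integrable f μ) (hg_int : Integrable g μ)
    (hfgh : ∀ᵐ x ∂μ, h x ^ 2 ≤ f x * g x) :
    (∫ x, |h x| ∂μ) ^ 2 ≤ (∫ x, f x ∂μ) * ∫ x, g x ∂μ := by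
  have hf₀ : 0 ≤ ∫ x, f x ∂μ := integral_nonneg_of_ae hf
  have hg₀ : 0 ≤ ∫ x, g x ∂μ := integral_nonneg_of_ae hg
  by_cases hh_int : Integrable (fun x => |h x|) μ
  swap
  · rw [integral_undef hh_int]
    simpa using mul_nonneg hf₀ hg₀
  have hle : ∫ x, |h x| ∂μ ≤ √(∫ x, f x ∂μ) * √(∫ x, g x ∂μ) := by
    refine (integral_mono_ae hh_int ?_ ?_).trans (integral_sqrt_mul_sqrt_le hf hg hf_int hg_int)
    · exact (hf_int.memLp_two_sqrt hf).integrable_mul (hg_int.memLp_two_sqrt hg)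
    · filter_upwards [hf, hfgh] with x hx hx'
      rw [← sqrt_mul hx, ← sqrt_sq_eq_abs]
      exact sqrt_le_sqrt hx'
  calc (∫ x, |h x| ∂μ) ^ 2 ≤ (√(∫ x, f x ∂μ) * √(∫ x, g x ∂μ)) ^ 2 :=
        pow_le_pow_left₀ (integral_nonneg fun x => abs_nonneg _) hle 2
    _ = (∫ x, f x ∂μ) * ∫ x, g x ∂μ := by rw [mul_pow, sq_sqrt hf₀, sq_sqrt hg₀]

end CauchySchwarz

theorem csiszar_kullback_general {α : Type*} [MeasurableSpace α] (μ : Measure α)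
    [IsProbabilityMeasure μ] (g : α → ℝ)
    (hg_nonneg : ∀ x, 0 ≤ g x) (hg_int : Integrable g μ)
    (hglog_int : Integrable (fun x => g x * Real.log (g x)) μ)
    (hg_mass : ∫ x, g x ∂μ = 1) :
    (∫ x, |g x - 1| ∂μ) ^ 2 ≤ 2 * ∫ x, g x * Real.log (g x) ∂μ := by
  have hw_int : Integrable (fun x => (2 * g x + 4) / 3) μ :=
    ((hg_int.const_mul 2).add (integrable_const 4)).div_const 3
  have hw_mass : ∫ x, (2 * g x + 4) / 3 ∂μ = 2 := by
    rw [integral_div, integral_add (hg_int.const_mul 2) (integrable_const 4), integral_const_mul,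
      hg_mass, integral_const]
    norm_num
  have hglog_add_one_int : Integrable (fun x => g x * log (g x) + 1) μ :=
    hglog_int.add (integrable_const 1)
  have hkl_integral : ∫ x, klFun (g x) ∂μ = ∫ x, g x * log (g x) ∂μ := by
    simp_rw [klFun_apply]
    rw [integral_sub hglog_add_one_int hg_int, integral_add hglog_int (integrable_const 1),
      hg_mass]
    simp
  have hpointwise (x : α) : (g x - 1) ^ 2 ≤ (2 * g x + 4) / 3 * klFun (g x) := by
    have := three_mul_sq_sub_one_le_mul_klFun (hg_nonneg x)
    rw [div_mul_eq_mul_div, le_div_iff₀ three_pos]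
    linarith
  calc (∫ x, |g x - 1| ∂μ) ^ 2
      ≤ (∫ x, (2 * g x + 4) / 3 ∂μ) * ∫ x, klFun (g x) ∂μ :=
        sq_integral_abs_le_integral_mul_integral
          (ae_of_all _ fun x => by have := hg_nonneg x; positivity)
          (ae_of_all _ fun x => klFun_nonneg (hg_nonneg x)) hw_int
          (hglog_add_one_int.sub hg_int) (ae_of_all _ hpointwise)
    _ = 2 * ∫ x, g x * log (g x) ∂μ := by rw [hw_mass, hkl_integral]

theorem csiszar_kullback {α : Type*} [MeasurableSpace α] (μ : Measure α)
    [IsProbabilityMeasure μ] (g : α → ℝ) (hg_meas : Measurable g)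
    (hg_nonneg : ∀ x, 0 ≤ g x) (hg_int : Integrable g μ)
    (hglog_int : Integrable (fun x => g x * Real.log (g x)) μ)
    (hg_mass : ∫ x, g x ∂μ = 1) :
    (∫ x, |g x - 1| ∂μ) ^ 2 ≤ 2 * ∫ x, g x * Real.log (g x) ∂μ :=
  csiszar_kullback_general μ g hg_nonneg hg_int hglog_int hg_mass
end

section
/- Let μ be a probability measure and f ∈ L^q(μ) for some q > 2 with f ≥ 0. Then ∫ f² log(f²/‖f‖²_{L²_μ}) dμ ≤ (q/(q-2)) ‖f - μf‖²_{L^q_μ} + ((q-4)/(q-2)) ‖f - μf‖²_{L²_μ}, where μf = ∫ f dμ. -/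
/-!
Write `a = μf`, `g = f - a` and `S = ∫ g² dμ`, so that `∫ f² dμ = a² + S`. After the scaling
`f = a (1 + x)`, `S = a² s`, Rothaus' lemma `Ent(f²) ≤ Ent(g²) + 2S` follows by integrating
  `(1+x)² log((1+x)²/(1+s)) ≤ x² log(x²/s) + 2x² + (2 - (4/3) log(1+s)) x`,
whose linear term has mean zero. The log-sum inequality with weights `x²` and `1 + 2x/3`
eliminates `s` (this is what fixes the coefficient `4/3`), leaving a one-variable inequality
`rothausGap x ≤ 0` with a fourth-order zero at `x = 0`, proved by differentiating three times.
Finally `Ent(g²) ≤ q/(q-2) (‖g‖_q² - S)`: compare with the scale `t = ‖g‖_q²` through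
`log u ≤ (u^r - 1)/r`, `r = (q-2)/2`, and use `S log(t/S) ≤ t - S`.
-/

open Real MeasureTheory

lemma nonpos_of_mul_deriv_nonpos {f f' : ℝ → ℝ} {a x : ℝ} (ha : a < 0)
    (hf : ∀ y, a < y → HasDerivAt f (f' y) y) (hf' : ∀ y, a < y → y * f' y ≤ 0) (h0 : f 0 = 0)
    (hx : a < x) : f x ≤ 0 := by
  have hcont : ContinuousOn f (Set.Ioi a) :=
    fun y hy => (hf y hy).continuousAt.continuousWithinAt
  rcases le_total 0 x with hx0 | hx0
  · have : AntitoneOn f (Set.Ici 0) := by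
      refine antitoneOn_of_hasDerivWithinAt_nonpos (convex_Ici 0)
        (hcont.mono (Set.Ici_subset_Ioi.2 ha)) (fun y hy => (hf y ?_).hasDerivWithinAt) ?_
      · rw [interior_Ici] at hy; exact ha.trans hy
      · intro y hy
        rw [interior_Ici] at hy
        exact nonpos_of_mul_nonpos_right (hf' y (ha.trans hy)) hy
    exact h0 ▸ this (Set.mem_Ici.2 le_rfl) hx0 hx0
  · have : MonotoneOn f (Set.Ioc a 0) := by
      refine monotoneOn_of_hasDerivWithinAt_nonneg (convex_Ioc a 0)
        (hcont.mono Set.Ioc_subset_Ioi_self) (fun y hy => (hf y ?_).hasDerivWithinAt) ?_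
      · rw [interior_Ioc] at hy; exact hy.1
      · intro y hy
        rw [interior_Ioc] at hy
        exact nonneg_of_mul_nonpos_right (hf' y hy.1) hy.2
    exact h0 ▸ this ⟨hx, hx0⟩ ⟨ha, le_rfl⟩ hx0

lemma mul_nonpos_of_deriv_nonpos {f f' : ℝ → ℝ} {a x : ℝ} (ha : a < 0)
    (hf : ∀ y, a < y → HasDerivAt f (f' y) y) (hf' : ∀ y, a < y → f' y ≤ 0) (h0 : f 0 = 0)
    (hx : a < x) : x * f x ≤ 0 := by
  have : AntitoneOn f (Set.Ioi a) := by
    refine antitoneOn_of_hasDerivWithinAt_nonpos (f' := f') (convex_Ioi a)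
      (fun y hy => (hf y hy).continuousAt.continuousWithinAt) (fun y hy => ?_) (fun y hy => ?_)
    all_goals rw [interior_Ioi] at hy
    exacts [(hf y hy).hasDerivWithinAt, hf' y hy]
  rcases le_total 0 x with hx0 | hx0
  · exact mul_nonpos_of_nonneg_of_nonpos hx0 (h0 ▸ this ha hx hx0)
  · exact mul_nonpos_of_nonpos_of_nonneg hx0 (h0 ▸ this hx ha hx0)

lemma mul_log_div_eq {u c : ℝ} (hc : c ≠ 0) : u * log (u / c) = u * log u - u * log c := by
  rcases eq_or_ne u 0 with rfl | hu
  · simp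
  · rw [log_div hu hc, mul_sub]

lemma sub_le_mul_log_div {u c : ℝ} (hu : 0 ≤ u) (hc : 0 < c) : u - c ≤ u * log (u / c) := by
  rcases hu.eq_or_lt with rfl | hu
  · simpa using hc.le
  · calc u - c = u * (1 - (u / c)⁻¹) := by field_simp
      _ ≤ u * log (u / c) :=
        mul_le_mul_of_nonneg_left (one_sub_inv_le_log_of_pos (div_pos hu hc)) hu.le

/-- The log-sum inequality for two terms. -/
lemma add_mul_log_div_add_le {u v y z : ℝ} (hu : 0 ≤ u) (hv : 0 ≤ v) (hy : 0 < y) (hz : 0 < z) :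
    (u + v) * log ((u + v) / (y + z)) ≤ u * log (u / y) + v * log (v / z) := by
  rcases (add_nonneg hu hv).eq_or_lt with hw | hw
  · obtain ⟨rfl, rfl⟩ : u = 0 ∧ v = 0 := ⟨by linarith, by linarith⟩
    simp
  have hr : 0 < (u + v) / (y + z) := div_pos hw (by linarith)
  have hu' := sub_le_mul_log_div hu (mul_pos hy hr)
  have hv' := sub_le_mul_log_div hv (mul_pos hz hr)
  have hyz : y * ((u + v) / (y + z)) + z * ((u + v) / (y + z)) = u + v := by
    field_simp
  rw [mul_log_div_eq (by positivity), log_mul hy.ne' hr.ne'] at hu'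
  rw [mul_log_div_eq (by positivity), log_mul hz.ne' hr.ne'] at hv'
  rw [mul_log_div_eq hy.ne', mul_log_div_eq hz.ne']
  linarith

lemma sq_mul_log_div_le_rpow {q c : ℝ} (hq : 2 < q) (hc : 0 < c) (y : ℝ) :
    y ^ 2 * log (y ^ 2 / c) ≤ 2 / (q - 2) * (|y| ^ q / c ^ ((q - 2) / 2) - y ^ 2) := by
  have hq' : 0 < q - 2 := by linarith
  rcases eq_or_ne y 0 with rfl | hy
  · simp [zero_rpow (by linarith : q ≠ 0)]
  have hu : 0 < y ^ 2 / c := by positivity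
  have hlog : (q - 2) / 2 * log (y ^ 2 / c) ≤ (y ^ 2 / c) ^ ((q - 2) / 2) - 1 := by
    rw [← log_rpow hu]
    exact log_le_sub_one_of_pos (rpow_pos_of_pos hu _)
  have hpow : y ^ 2 * (y ^ 2 / c) ^ ((q - 2) / 2) = |y| ^ q / c ^ ((q - 2) / 2) := by
    rw [div_rpow (sq_nonneg y) hc.le, ← sq_abs, ← rpow_natCast, ← rpow_mul (abs_nonneg y),
      mul_div_assoc', ← rpow_add (abs_pos.2 hy)]
    congr 2
    push_cast
    ring
  have key : (q - 2) / 2 * (y ^ 2 * log (y ^ 2 / c)) ≤ |y| ^ q / c ^ ((q - 2) / 2) - y ^ 2 := by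
    nlinarith [mul_le_mul_of_nonneg_left hlog (sq_nonneg y)]
  calc y ^ 2 * log (y ^ 2 / c) = 2 / (q - 2) * ((q - 2) / 2 * (y ^ 2 * log (y ^ 2 / c))) := by
        field_simp [hq'.ne']
    _ ≤ _ := mul_le_mul_of_nonneg_left key (div_nonneg zero_le_two hq'.le)

noncomputable def rothausGap (x : ℝ) : ℝ :=
  (1 + x) ^ 2 * log ((1 + x) ^ 2) + (1 + 2 * x / 3) * log (1 + 2 * x / 3)
    - (x ^ 2 + 2 * x / 3 + 1) * log (x ^ 2 + 2 * x / 3 + 1) - (2 * x ^ 2 + 2 * x)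

noncomputable def rothausGapD1 (x : ℝ) : ℝ :=
  2 * (1 + x) * log ((1 + x) ^ 2) + 2 / 3 * log (1 + 2 * x / 3)
    - (2 * x + 2 / 3) * log (x ^ 2 + 2 * x / 3 + 1) - 4 * x

noncomputable def rothausGapD2 (x : ℝ) : ℝ :=
  2 * log ((1 + x) ^ 2) + 4 / 9 / (1 + 2 * x / 3)
    - 2 * log (x ^ 2 + 2 * x / 3 + 1) - (2 * x + 2 / 3) ^ 2 / (x ^ 2 + 2 * x / 3 + 1)

noncomputable def rothausGapD3 (x : ℝ) : ℝ :=
  4 / (1 + x) - 8 / 27 / (1 + 2 * x / 3) ^ 2 - 6 * (2 * x + 2 / 3) / (x ^ 2 + 2 * x / 3 + 1)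
    + (2 * x + 2 / 3) ^ 3 / (x ^ 2 + 2 * x / 3 + 1) ^ 2

section
variable {x : ℝ}

lemma hasDerivAt_one_add_sq : HasDerivAt (fun x : ℝ => (1 + x) ^ 2) (2 * (1 + x)) x :=
  (((hasDerivAt_id' x).const_add 1).fun_pow 2).congr_deriv (by norm_num)

lemma hasDerivAt_one_add_two_mul_div_three : HasDerivAt (fun x : ℝ => 1 + 2 * x / 3) (2 / 3) x :=
  ((((hasDerivAt_id' x).const_mul 2).div_const 3).const_add 1).congr_deriv (by norm_num)

lemma hasDerivAt_sq_add_two_mul_div_three_add_one :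
    HasDerivAt (fun x : ℝ => x ^ 2 + 2 * x / 3 + 1) (2 * x + 2 / 3) x :=
  (((hasDerivAt_pow 2 x).fun_add (((hasDerivAt_id' x).const_mul 2).div_const 3)).add_const 1
    ).congr_deriv (by norm_num)

lemma one_add_two_mul_div_three_pos (hx : -1 < x) : 0 < 1 + 2 * x / 3 := by linarith

lemma sq_add_two_mul_div_three_add_one_pos (x : ℝ) : 0 < x ^ 2 + 2 * x / 3 + 1 := by
  nlinarith [sq_nonneg (x + 1 / 3)]

lemma hasDerivAt_rothausGap (hx : -1 < x) : HasDerivAt rothausGap (rothausGapD1 x) x := by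
  have h1 : 1 + x ≠ 0 := (by linarith : (0:ℝ) < 1 + x).ne'
  have hU : (1 + x) ^ 2 ≠ 0 := pow_ne_zero 2 h1
  have hB := (one_add_two_mul_div_three_pos hx).ne'
  have hA := (sq_add_two_mul_div_three_add_one_pos x).ne'
  have dU := hasDerivAt_one_add_sq (x := x)
  have dB := hasDerivAt_one_add_two_mul_div_three (x := x)
  have dA := hasDerivAt_sq_add_two_mul_div_three_add_one (x := x)
  have := (((dU.fun_mul (dU.log hU)).fun_add (dB.fun_mul (dB.log hB))).fun_sub
    (dA.fun_mul (dA.log hA))).fun_sub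
    (((hasDerivAt_pow 2 x).const_mul 2).fun_add ((hasDerivAt_id' x).const_mul 2))
  refine this.congr_deriv ?_
  rw [rothausGapD1]
  -- only `A / A = 1` and `B / B = 1` are needed, so `A` and `B` can be made atoms for `field_simp`
  generalize x ^ 2 + 2 * x / 3 + 1 = A at hA ⊢
  generalize 1 + 2 * x / 3 = B at hB ⊢
  field_simp
  ring

lemma hasDerivAt_rothausGapD1 (hx : -1 < x) : HasDerivAt rothausGapD1 (rothausGapD2 x) x := by
  have h1 : 1 + x ≠ 0 := (by linarith : (0:ℝ) < 1 + x).ne'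
  have hU : (1 + x) ^ 2 ≠ 0 := pow_ne_zero 2 h1
  have hB := (one_add_two_mul_div_three_pos hx).ne'
  have hA := (sq_add_two_mul_div_three_add_one_pos x).ne'
  have dU := hasDerivAt_one_add_sq (x := x)
  have dB := hasDerivAt_one_add_two_mul_div_three (x := x)
  have dA := hasDerivAt_sq_add_two_mul_div_three_add_one (x := x)
  have := (((((hasDerivAt_id' x).const_add 1).const_mul 2).fun_mul (dU.log hU)).fun_add
    ((dB.log hB).const_mul (2 / 3))).fun_sub
    ((((hasDerivAt_id' x).const_mul 2).add_const (2 / 3)).fun_mul (dA.log hA))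
    |>.fun_sub ((hasDerivAt_id' x).const_mul 4)
  refine this.congr_deriv ?_
  rw [rothausGapD2]
  generalize x ^ 2 + 2 * x / 3 + 1 = A at hA ⊢
  generalize 1 + 2 * x / 3 = B at hB ⊢
  field_simp
  ring

lemma hasDerivAt_rothausGapD2 (hx : -1 < x) : HasDerivAt rothausGapD2 (rothausGapD3 x) x := by
  have h1 : 1 + x ≠ 0 := (by linarith : (0:ℝ) < 1 + x).ne'
  have hU : (1 + x) ^ 2 ≠ 0 := pow_ne_zero 2 h1
  have hB := (one_add_two_mul_div_three_pos hx).ne'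
  have hA := (sq_add_two_mul_div_three_add_one_pos x).ne'
  have dU := hasDerivAt_one_add_sq (x := x)
  have dB := hasDerivAt_one_add_two_mul_div_three (x := x)
  have dA := hasDerivAt_sq_add_two_mul_div_three_add_one (x := x)
  have := ((((dU.log hU).const_mul 2).fun_add
    ((hasDerivAt_const x (4 / 9 : ℝ)).fun_div dB hB)).fun_sub
    ((dA.log hA).const_mul 2)).fun_sub
    (((((hasDerivAt_id' x).const_mul 2).add_const (2 / 3)).fun_pow 2).fun_div dA hA)
  refine this.congr_deriv ?_
  rw [rothausGapD3]
  generalize x ^ 2 + 2 * x / 3 + 1 = A at hA ⊢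
  generalize 1 + 2 * x / 3 = B at hB ⊢
  field_simp
  ring

lemma mul_rothausGapD3_nonpos (hx : -1 < x) : x * rothausGapD3 x ≤ 0 := by
  have h1 : 0 < 1 + x := by linarith
  have hB := one_add_two_mul_div_three_pos hx
  have hA := sq_add_two_mul_div_three_add_one_pos x
  have hQ : 0 < 120 * x ^ 4 + 568 * x ^ 3 + 1352 * x ^ 2 + 1704 * x + 864 := by
    nlinarith [pow_pos h1 4, pow_pos h1 3, pow_pos h1 2]
  have hD3 : rothausGapD3 x = -(x * (120 * x ^ 4 + 568 * x ^ 3 + 1352 * x ^ 2 + 1704 * x + 864))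
      / (81 * ((1 + x) * (1 + 2 * x / 3) ^ 2 * (x ^ 2 + 2 * x / 3 + 1) ^ 2)) := by
    rw [rothausGapD3]
    -- clear the denominators with `A` and `B` as atoms, then substitute them back
    generalize hA' : x ^ 2 + 2 * x / 3 + 1 = A at hA ⊢
    generalize hB' : 1 + 2 * x / 3 = B at hB ⊢
    field_simp
    subst hA' hB'
    ring
  rw [hD3, mul_div_assoc']
  apply div_nonpos_of_nonpos_of_nonneg _ (by positivity)
  nlinarith [mul_nonneg (sq_nonneg x) hQ.le]

end

lemma rothausGapD2_nonpos {x : ℝ} (hx : -1 < x) : rothausGapD2 x ≤ 0 :=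
  nonpos_of_mul_deriv_nonpos (by norm_num) (fun _ => hasDerivAt_rothausGapD2)
    (fun _ => mul_rothausGapD3_nonpos) (by norm_num [rothausGapD2]) hx

lemma mul_rothausGapD1_nonpos {x : ℝ} (hx : -1 < x) : x * rothausGapD1 x ≤ 0 :=
  mul_nonpos_of_deriv_nonpos (by norm_num) (fun _ => hasDerivAt_rothausGapD1)
    (fun _ => rothausGapD2_nonpos) (by simp [rothausGapD1]) hx

lemma rothausGap_nonpos {x : ℝ} (hx : -1 ≤ x) : rothausGap x ≤ 0 := by
  rcases hx.eq_or_lt with rfl | hx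
  · norm_num [rothausGap]
    linarith [log_nonpos (by norm_num : (0:ℝ) ≤ 1 / 3) (by norm_num),
      log_nonneg (by norm_num : (1:ℝ) ≤ 4 / 3)]
  · exact nonpos_of_mul_deriv_nonpos (by norm_num) (fun _ => hasDerivAt_rothausGap)
      (fun _ => mul_rothausGapD1_nonpos) (by simp [rothausGap]) hx

lemma rothaus_normalized {s x : ℝ} (hs : 0 < s) (hx : -1 ≤ x) :
    (1 + x) ^ 2 * log ((1 + x) ^ 2 / (1 + s)) ≤
      x ^ 2 * log (x ^ 2 / s) + 2 * x ^ 2 + (2 - 4 / 3 * log (1 + s)) * x := by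
  have hB : 0 < 1 + 2 * x / 3 := by linarith
  have hsum := add_mul_log_div_add_le (sq_nonneg x) hB.le hs one_pos
  have hgap := rothausGap_nonpos hx
  rw [rothausGap] at hgap
  rw [mul_log_div_eq (by positivity), mul_log_div_eq (by positivity)] at hsum
  rw [mul_log_div_eq (by positivity), mul_log_div_eq hs.ne']
  rw [add_comm s 1, div_one, show x ^ 2 + (1 + 2 * x / 3) = x ^ 2 + 2 * x / 3 + 1 by ring] at hsum
  linear_combination hsum + hgap

lemma rothaus_pointwise {a S y : ℝ} (ha : 0 < a) (hS : 0 < S) (hy : 0 ≤ y) :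
    y ^ 2 * log (y ^ 2 / (a ^ 2 + S)) ≤ (y - a) ^ 2 * log ((y - a) ^ 2 / S) + 2 * (y - a) ^ 2
      + a * (2 - 4 / 3 * log (1 + S / a ^ 2)) * (y - a) := by
  have hx : -1 ≤ (y - a) / a := by rw [le_div_iff₀ ha]; linarith
  have h := mul_le_mul_of_nonneg_left (rothaus_normalized (div_pos hS (pow_pos ha 2)) hx)
    (sq_nonneg a)
  have hq1 : (1 + (y - a) / a) ^ 2 / (1 + S / a ^ 2) = y ^ 2 / (a ^ 2 + S) := by
    field_simp; ring
  have hq2 : ((y - a) / a) ^ 2 / (S / a ^ 2) = (y - a) ^ 2 / S := by field_simp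
  rw [hq1, hq2] at h
  have e1 : a ^ 2 * (1 + (y - a) / a) ^ 2 = y ^ 2 := by field_simp; ring
  have e2 : a ^ 2 * ((y - a) / a) ^ 2 = (y - a) ^ 2 := by field_simp
  have e3 : a ^ 2 * ((y - a) / a) = a * (y - a) := by field_simp
  linear_combination h - log (y ^ 2 / (a ^ 2 + S)) * e1 + (log ((y - a) ^ 2 / S) + 2) * e2
    + (2 - 4 / 3 * log (1 + S / a ^ 2)) * e3

/-- `Ent_μ(f²)`. -/
noncomputable def sqEntropy {α : Type*} [MeasurableSpace α] (μ : Measure α) (f : α → ℝ) : ℝ :=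
  ∫ x, f x ^ 2 * log (f x ^ 2 / ∫ y, f y ^ 2 ∂μ) ∂μ

section
variable {α : Type*} [MeasurableSpace α] {μ : Measure α}

lemma integrable_sq_mul_log_div [IsFiniteMeasure μ] {g : α → ℝ} {q c : ℝ} (hg : AEMeasurable g μ)
    (hq : 2 < q) (hc : 0 < c) (hgq : Integrable (fun x => |g x| ^ q) μ) :
    Integrable (fun x => g x ^ 2 * log (g x ^ 2 / c)) μ := by
  have hq' : 0 < q - 2 := by linarith
  refine ((hgq.const_mul (2 / (q - 2) / c ^ ((q - 2) / 2))).add (integrable_const c)).mono'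
    ((hg.pow_const 2).mul ((hg.pow_const 2).div_const c).log).aestronglyMeasurable
    (ae_of_all _ fun x => ?_)
  have hlower := sub_le_mul_log_div (sq_nonneg (g x)) hc
  have hupper := sq_mul_log_div_le_rpow hq hc (g x)
  have h1 : 0 ≤ 2 / (q - 2) / c ^ ((q - 2) / 2) * |g x| ^ q := by positivity
  have h2 : 0 ≤ 2 / (q - 2) * g x ^ 2 := by positivity
  simp only [Pi.add_apply, Real.norm_eq_abs, abs_le]
  constructor
  · nlinarith
  · have : 2 / (q - 2) * (|g x| ^ q / c ^ ((q - 2) / 2) - g x ^ 2)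
        = 2 / (q - 2) / c ^ ((q - 2) / 2) * |g x| ^ q - 2 / (q - 2) * g x ^ 2 := by ring
    linarith

lemma integrable_sub_integral_sq [IsFiniteMeasure μ] {f : α → ℝ} (hf1 : Integrable f μ)
    (hf2 : Integrable (fun x => f x ^ 2) μ) :
    Integrable (fun x => (f x - ∫ y, f y ∂μ) ^ 2) μ :=
  (((memLp_two_iff_integrable_sq hf1.aestronglyMeasurable).2 hf2).sub (memLp_const _)).integrable_sq

lemma integral_pos_of_integral_sq_pos {f : α → ℝ} (hf : 0 ≤ f) (hf1 : Integrable f μ)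
    (hf2 : Integrable (fun x => f x ^ 2) μ) (h : 0 < ∫ x, f x ^ 2 ∂μ) : 0 < ∫ x, f x ∂μ := by
  rw [integral_pos_iff_support_of_nonneg hf hf1]
  rwa [integral_pos_iff_support_of_nonneg (fun x => sq_nonneg (f x)) hf2,
    Function.support_pow _ two_ne_zero] at h

variable [IsProbabilityMeasure μ]

lemma sqEntropy_le_rpow {g : α → ℝ} {q : ℝ} (hg : AEMeasurable g μ) (hq : 2 < q)
    (hg2 : Integrable (fun x => g x ^ 2) μ) (hgq : Integrable (fun x => |g x| ^ q) μ)
    (hS : 0 < ∫ x, g x ^ 2 ∂μ) :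
    sqEntropy μ g ≤ q / (q - 2) * (((∫ x, |g x| ^ q ∂μ) ^ (1 / q)) ^ 2 - ∫ x, g x ^ 2 ∂μ) := by
  set S := ∫ x, g x ^ 2 ∂μ
  set T := ∫ x, |g x| ^ q ∂μ
  have hq' : 0 < q - 2 := by linarith
  have hT : 0 < T := by
    have hsupp : Function.support (fun x => |g x| ^ q) = Function.support (fun x => g x ^ 2) := by
      ext x; simp [rpow_eq_zero (abs_nonneg _) (by linarith : q ≠ 0)]
    rw [integral_pos_iff_support_of_nonneg (fun x => by positivity) hgq, hsupp,
      ← integral_pos_iff_support_of_nonneg (fun x => sq_nonneg (g x)) hg2]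
    exact hS
  have htq : ((T ^ (1 / q)) ^ 2) ^ (q / 2) = T := by
    rw [← rpow_natCast, ← rpow_mul (by positivity), ← rpow_mul hT.le]
    rw [show (1 / q * ((2 : ℕ) * (q / 2)) : ℝ) = 1 by push_cast; field_simp, rpow_one]
  set t := (T ^ (1 / q)) ^ 2
  have ht : 0 < t := by positivity
  have hTt : T / t ^ ((q - 2) / 2) = t := by
    nth_rw 1 [← htq]
    rw [← rpow_sub ht, show q / 2 - (q - 2) / 2 = 1 by ring, rpow_one]
  have hpt : ∀ x, g x ^ 2 * log (g x ^ 2 / S) ≤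
      2 / (q - 2) * (|g x| ^ q / t ^ ((q - 2) / 2) - g x ^ 2) + g x ^ 2 * log (t / S) := by
    intro x
    have := sq_mul_log_div_le_rpow hq ht (g x)
    rw [mul_log_div_eq ht.ne'] at this
    rw [mul_log_div_eq hS.ne', log_div ht.ne' hS.ne']
    linarith
  have hlog : S * log (t / S) ≤ t - S := by
    have := sub_le_mul_log_div hS.le ht
    rw [log_div hS.ne' ht.ne'] at this
    rw [log_div ht.ne' hS.ne']
    linarith
  have hint : Integrable (fun x => |g x| ^ q / t ^ ((q - 2) / 2) - g x ^ 2) μ :=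
    (hgq.div_const _).sub hg2
  calc sqEntropy μ g
      ≤ ∫ x, (2 / (q - 2) * (|g x| ^ q / t ^ ((q - 2) / 2) - g x ^ 2)
          + g x ^ 2 * log (t / S)) ∂μ :=
        integral_mono (integrable_sq_mul_log_div hg hq hS hgq)
          ((hint.const_mul _).add (hg2.mul_const _)) hpt
    _ = 2 / (q - 2) * (t - S) + S * log (t / S) := by
        rw [integral_add (hint.const_mul _) (hg2.mul_const _),
          integral_const_mul, integral_sub (hgq.div_const _) hg2, integral_div, integral_mul_const,
          hTt]
    _ ≤ 2 / (q - 2) * (t - S) + (t - S) := by gcongr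
    _ = q / (q - 2) * (t - S) := by field_simp; ring

lemma integral_sq_eq_sq_integral_add {f : α → ℝ} (hf1 : Integrable f μ)
    (hf2 : Integrable (fun x => f x ^ 2) μ) :
    ∫ x, f x ^ 2 ∂μ = (∫ x, f x ∂μ) ^ 2 + ∫ x, (f x - ∫ y, f y ∂μ) ^ 2 ∂μ := by
  have hvar := ProbabilityTheory.variance_eq_sub
    ((memLp_two_iff_integrable_sq hf1.aestronglyMeasurable).2 hf2)
  rw [ProbabilityTheory.variance_eq_integral hf1.aemeasurable] at hvar
  rw [hvar]
  simp

/-- Rothaus' lemma. -/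
lemma sqEntropy_le_sqEntropy_sub_integral_add {f : α → ℝ} (hf : ∀ x, 0 ≤ f x)
    (hf1 : Integrable f μ) (hf2 : Integrable (fun x => f x ^ 2) μ)
    (hent : Integrable (fun x => f x ^ 2 * log (f x ^ 2 / ∫ y, f y ^ 2 ∂μ)) μ)
    (hgent : Integrable (fun x => (f x - ∫ y, f y ∂μ) ^ 2 *
      log ((f x - ∫ y, f y ∂μ) ^ 2 / ∫ y, (f y - ∫ z, f z ∂μ) ^ 2 ∂μ)) μ)
    (ha : 0 < ∫ x, f x ∂μ) (hS : 0 < ∫ x, (f x - ∫ y, f y ∂μ) ^ 2 ∂μ) :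
    sqEntropy μ f ≤
      sqEntropy μ (fun x => f x - ∫ y, f y ∂μ) + 2 * ∫ x, (f x - ∫ y, f y ∂μ) ^ 2 ∂μ := by
  have hN := integral_sq_eq_sq_integral_add hf1 hf2
  set a := ∫ x, f x ∂μ
  set S := ∫ x, (f x - a) ^ 2 ∂μ
  set c := a * (2 - 4 / 3 * log (1 + S / a ^ 2))
  have hg1 : Integrable (fun x => f x - a) μ := hf1.sub (integrable_const a)
  have hg2 : Integrable (fun x => (f x - a) ^ 2) μ := integrable_sub_integral_sq hf1 hf2
  have hmean : ∫ x, (f x - a) ∂μ = 0 := by simp [integral_sub hf1 (integrable_const a), a]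
  have hpt : ∀ x, f x ^ 2 * log (f x ^ 2 / ∫ y, f y ^ 2 ∂μ) ≤
      (f x - a) ^ 2 * log ((f x - a) ^ 2 / S) + 2 * (f x - a) ^ 2 + c * (f x - a) := fun x => by
    rw [hN]; exact rothaus_pointwise ha hS (hf x)
  have hint : Integrable
      (fun x => (f x - a) ^ 2 * log ((f x - a) ^ 2 / S) + 2 * (f x - a) ^ 2) μ :=
    hgent.add (hg2.const_mul 2)
  calc sqEntropy μ f
      ≤ ∫ x, ((f x - a) ^ 2 * log ((f x - a) ^ 2 / S) + 2 * (f x - a) ^ 2 + c * (f x - a)) ∂μ :=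
        integral_mono hent (hint.add (hg1.const_mul c)) hpt
    _ = sqEntropy μ (fun x => f x - a) + 2 * S := by
        rw [integral_add hint (hg1.const_mul c), integral_add hgent (hg2.const_mul 2),
          integral_const_mul, integral_const_mul, hmean, mul_zero, add_zero]
        rfl

lemma sqEntropy_of_ae_eq_const {f : α → ℝ} {a : ℝ} (h : f =ᵐ[μ] fun _ => a) :
    sqEntropy μ f = 0 := by
  have hN : ∫ y, f y ^ 2 ∂μ = a ^ 2 := by
    rw [integral_congr_ae (g := fun _ => a ^ 2) (h.mono fun x hx => by simp only [hx])]
    simp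
  rw [sqEntropy, hN, integral_congr_ae (g := fun _ => a ^ 2 * log (a ^ 2 / a ^ 2))
    (h.mono fun x hx => by simp only [hx])]
  rcases eq_or_ne a 0 with rfl | ha <;> simp [*]

end

theorem logSob_starting_point_general {α : Type*} [MeasurableSpace α] (μ : Measure α)
    [IsProbabilityMeasure μ] (f : α → ℝ)
    (hf_nonneg : ∀ x, 0 ≤ f x) (q : ℝ) (hq : 2 < q)
    (hfq : Integrable (fun x => |f x - ∫ y, f y ∂μ| ^ q) μ)
    (hf2 : Integrable (fun x => (f x) ^ 2) μ)
    (hf1 : Integrable f μ)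
    (hpos : 0 < ∫ x, (f x) ^ 2 ∂μ)
    (hent : Integrable (fun x => (f x) ^ 2 * Real.log ((f x) ^ 2 / ∫ y, (f y) ^ 2 ∂μ)) μ) :
    ∫ x, (f x) ^ 2 * Real.log ((f x) ^ 2 / ∫ y, (f y) ^ 2 ∂μ) ∂μ ≤
      (q / (q - 2)) * ((∫ x, |f x - ∫ y, f y ∂μ| ^ q ∂μ) ^ (1 / q)) ^ 2 +
      ((q - 4) / (q - 2)) * ∫ x, |f x - ∫ y, f y ∂μ| ^ 2 ∂μ := by
  have hq' : 0 < q - 2 := by linarith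
  have ha := integral_pos_of_integral_sq_pos (fun x => hf_nonneg x) hf1 hf2 hpos
  have hg : AEMeasurable (fun x => f x - ∫ y, f y ∂μ) μ := hf1.aemeasurable.sub_const _
  have hg2 := integrable_sub_integral_sq hf1 hf2
  simp only [sq_abs]
  change sqEntropy μ f ≤ _
  have hS0 : 0 ≤ ∫ x, (f x - ∫ y, f y ∂μ) ^ 2 ∂μ := integral_nonneg fun x => sq_nonneg _
  rcases hS0.eq_or_lt with hS | hS
  · have hconst : f =ᵐ[μ] fun _ => ∫ y, f y ∂μ :=
      ((integral_eq_zero_iff_of_nonneg (fun x => sq_nonneg _) hg2).1 hS.symm).mono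
        fun x hx => by simpa [sub_eq_zero] using hx
    rw [sqEntropy_of_ae_eq_const hconst, ← hS, mul_zero, add_zero]
    positivity
  · calc sqEntropy μ f
        ≤ sqEntropy μ (fun x => f x - ∫ y, f y ∂μ) + 2 * ∫ x, (f x - ∫ y, f y ∂μ) ^ 2 ∂μ :=
          sqEntropy_le_sqEntropy_sub_integral_add hf_nonneg hf1 hf2 hent
            (integrable_sq_mul_log_div hg hq hS hfq) ha hS
      _ ≤ q / (q - 2) * (((∫ x, |f x - ∫ y, f y ∂μ| ^ q ∂μ) ^ (1 / q)) ^ 2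
            - ∫ x, (f x - ∫ y, f y ∂μ) ^ 2 ∂μ) + 2 * ∫ x, (f x - ∫ y, f y ∂μ) ^ 2 ∂μ := by
          gcongr
          exact sqEntropy_le_rpow hg hq hg2 hfq hS
      _ = _ := by field_simp; ring

theorem logSob_starting_point {α : Type*} [MeasurableSpace α] (μ : Measure α)
    [IsProbabilityMeasure μ] (f : α → ℝ) (hf_meas : Measurable f)
    (hf_nonneg : ∀ x, 0 ≤ f x) (q : ℝ) (hq : 2 < q)
    (hfq : Integrable (fun x => |f x - ∫ y, f y ∂μ| ^ q) μ)
    (hf2 : Integrable (fun x => (f x) ^ 2) μ)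
    (hf1 : Integrable f μ)
    (hpos : 0 < ∫ x, (f x) ^ 2 ∂μ)
    (hent : Integrable (fun x => (f x) ^ 2 * Real.log ((f x) ^ 2 / ∫ y, (f y) ^ 2 ∂μ)) μ) :
    ∫ x, (f x) ^ 2 * Real.log ((f x) ^ 2 / ∫ y, (f y) ^ 2 ∂μ) ∂μ ≤
      (q / (q - 2)) * ((∫ x, |f x - ∫ y, f y ∂μ| ^ q ∂μ) ^ (1 / q)) ^ 2 +
      ((q - 4) / (q - 2)) * ∫ x, |f x - ∫ y, f y ∂μ| ^ 2 ∂μ :=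
  logSob_starting_point_general μ f hf_nonneg q hq hfq hf2 hf1 hpos hent
end

section
/- Let T be a finite index set with weights m_K > 0 and values μ_K ≥ 0 such that ∑_K m_K μ_K = 1, and let μ^∞ = sup_K μ_K. For any family (f_K), writing f̄_μ = ∑_K m_K f_K μ_K and f̄ = (∑_K m_K f_K)/(∑_K m_K), one has ∑_K m_K |f_K - f̄_μ|² μ_K ≤ 4 μ^∞ ∑_K m_K |f_K - f̄|². -/
open Finset

theorem weighted_variance_reduction {T : Type*} [Fintype T] [Nonempty T]
    (m μ f : T → ℝ) (hm : ∀ K, 0 < m K) (hμ : ∀ K, 0 ≤ μ K)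
    (hmass : ∑ K, m K * μ K = 1) :
    ∑ K, m K * |f K - ∑ K', m K' * f K' * μ K'| ^ 2 * μ K ≤
      4 * (Finset.univ.sup' Finset.univ_nonempty μ) *
        ∑ K, m K * |f K - (∑ K', m K' * f K') / (∑ K', m K')| ^ 2 := by
  set s := Finset.univ.sup' Finset.univ_nonempty μ with hs_def
  have hs : ∀ K, μ K ≤ s := fun K => Finset.le_sup' μ (Finset.mem_univ K)
  have hs0 : 0 ≤ s := le_trans (hμ (Classical.arbitrary T)) (hs _)
  set fmu := ∑ K', m K' * f K' * μ K' with hfmu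
  set fbar := (∑ K', m K' * f K') / (∑ K', m K') with hfbar
  set S := ∑ K, m K * |f K - fbar| ^ 2 with hS
  have hS0 : 0 ≤ S := Finset.sum_nonneg fun K _ =>
    mul_nonneg (hm K).le (pow_nonneg (abs_nonneg _) 2)
  set w : T → ℝ := fun K => m K * μ K with hw
  have hw0 : ∀ K, 0 ≤ w K := fun K => mul_nonneg (hm K).le (hμ K)
  have hwsum : ∑ K, w K = 1 := hmass
  -- the key sup bound
  have hkey : ∀ (x : T → ℝ), ∑ K, w K * x K ^ 2 ≤ s * ∑ K, m K * x K ^ 2 := by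
    intro x
    rw [Finset.mul_sum]
    apply Finset.sum_le_sum
    intro K _
    have : w K * x K ^ 2 = μ K * (m K * x K ^ 2) := by simp [hw]; ring
    rw [this]
    have h2 : 0 ≤ m K * x K ^ 2 := mul_nonneg (hm K).le (sq_nonneg _)
    calc μ K * (m K * x K ^ 2) ≤ s * (m K * x K ^ 2) := by
          exact mul_le_mul_of_nonneg_right (hs K) h2
      _ = s * (m K * x K ^ 2) := rfl
  -- fbar - fmu = ∑ w K * (fbar - f K)
  have hdiff : fbar - fmu = ∑ K, w K * (fbar - f K) := by
    have h1 : ∑ K, w K * (fbar - f K) = (∑ K, w K) * fbar - ∑ K, w K * f K := by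
      rw [Finset.sum_mul, ← Finset.sum_sub_distrib]
      congr 1; ext K; ring
    rw [h1, hwsum, one_mul, hfmu]
    congr 1
    apply Finset.sum_congr rfl
    intro K _; simp only [hw]; ring
  -- Jensen
  have jensen : (fbar - fmu) ^ 2 ≤ ∑ K, w K * (fbar - f K) ^ 2 := by
    rw [hdiff]
    have := Finset.sum_sq_le_sum_mul_sum_of_sq_eq_mul Finset.univ
      (r := fun K => w K * (fbar - f K)) (f := w)
      (g := fun K => w K * (fbar - f K) ^ 2)
      (fun K _ => hw0 K) (fun K _ => mul_nonneg (hw0 K) (sq_nonneg _))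
      (fun K _ => by ring)
    simpa [hwsum] using this
  -- main estimate
  have hbound : ∀ K, w K * (f K - fmu) ^ 2 ≤
      2 * (w K * (f K - fbar) ^ 2) + 2 * (w K * (fbar - fmu) ^ 2) := by
    intro K
    have h1 : (f K - fmu) ^ 2 ≤ 2 * (f K - fbar) ^ 2 + 2 * (fbar - fmu) ^ 2 := by
      have := sq_nonneg ((f K - fbar) - (fbar - fmu))
      nlinarith
    nlinarith [hw0 K, sq_nonneg (f K - fmu), sq_nonneg (f K - fbar), sq_nonneg (fbar - fmu)]
  calc ∑ K, m K * |f K - fmu| ^ 2 * μ K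
      = ∑ K, w K * (f K - fmu) ^ 2 := by
        apply Finset.sum_congr rfl; intro K _; rw [sq_abs]; simp [hw]; ring
    _ ≤ ∑ K, (2 * (w K * (f K - fbar) ^ 2) + 2 * (w K * (fbar - fmu) ^ 2)) :=
        Finset.sum_le_sum fun K _ => hbound K
    _ = 2 * (∑ K, w K * (f K - fbar) ^ 2) + 2 * (fbar - fmu) ^ 2 := by
        rw [Finset.sum_add_distrib, ← Finset.mul_sum, ← Finset.mul_sum]
        congr 1
        rw [← Finset.sum_mul, hwsum, one_mul]
    _ ≤ 2 * (s * ∑ K, m K * (f K - fbar) ^ 2) + 2 * (s * ∑ K, m K * (fbar - f K) ^ 2) := by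
        gcongr
        · exact hkey _
        · calc (fbar - fmu) ^ 2 ≤ ∑ K, w K * (fbar - f K) ^ 2 := jensen
            _ ≤ s * ∑ K, m K * (fbar - f K) ^ 2 := hkey _
    _ = 4 * s * S := by
        have h1 : ∑ K, m K * (fbar - f K) ^ 2 = ∑ K, m K * (f K - fbar) ^ 2 := by
          apply Finset.sum_congr rfl; intro K _; ring
        have h2 : S = ∑ K, m K * (f K - fbar) ^ 2 := by
          apply Finset.sum_congr rfl; intro K _; rw [sq_abs]
        rw [h1, h2]; ring
end
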